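/- Let X ~ N(m, σ²) with σ > 0 and α = m/σ. Then Var(max(X, 0)) = (m² + σ²)Φ(α) + mσ·φ(α) − (mΦ(α) + σφ(α))². -/

import Mathlib

/-!
Write `X = m + σ Z` with `Z` standard normal. Then `max X 0 = (m + σ Z) 𝟙{Z > -α}`, so both
moments of `max X 0` are truncated moments of `Z` on `(-α, ∞)`. Since `φ' = -z φ`, the fundamental
theorem of calculus gives `∫_a^∞ z φ = φ(a)` and `∫_a^∞ z² φ = 1 - Φ(a) + a φ(a)`; at `a = -α` the
symmetry `Φ(-α) = 1 - Φ(α)` turns `Var = E[X⁺²] - E[X⁺]²` into the stated formula.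
-/

open MeasureTheory ProbabilityTheory

noncomputable def stdNormalPhi : ℝ → ℝ := fun x => cdf (gaussianReal 0 1) x

noncomputable def stdNormalPdf : ℝ → ℝ :=
  fun x => (Real.sqrt (2 * Real.pi))⁻¹ * Real.exp (-x ^ 2 / 2)

open Real Set Filter Topology

lemma gaussianPDFReal_zero_one : gaussianPDFReal 0 1 = stdNormalPdf := by
  funext x
  simp [gaussianPDFReal, stdNormalPdf]

lemma stdNormalPdf_neg (x : ℝ) : stdNormalPdf (-x) = stdNormalPdf x := by
  simp [stdNormalPdf]

lemma continuous_stdNormalPdf : Continuous stdNormalPdf := by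
  unfold stdNormalPdf
  fun_prop

lemma hasDerivAt_stdNormalPdf (x : ℝ) : HasDerivAt stdNormalPdf (-x * stdNormalPdf x) x := by
  have h : HasDerivAt (fun x : ℝ => -x ^ 2 / 2) (-x) x := by
    simpa using ((hasDerivAt_pow 2 x).neg.div_const 2).congr_deriv (by ring : _ = -x)
  unfold stdNormalPdf
  exact ((h.exp).const_mul (√(2 * π))⁻¹).congr_deriv (by ring)

lemma integrable_stdNormalPdf : Integrable stdNormalPdf :=
  gaussianPDFReal_zero_one ▸ integrable_gaussianPDFReal 0 1

lemma stdNormalPdf_eq_mul_exp (x : ℝ) :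
    stdNormalPdf x = (√(2 * π))⁻¹ * exp (-(1 / 2) * x ^ 2) := by
  simp only [stdNormalPdf]
  ring_nf

lemma integrable_pow_mul_stdNormalPdf (n : ℕ) :
    Integrable fun x => x ^ n * stdNormalPdf x := by
  have h := (integrable_rpow_mul_exp_neg_mul_sq (b := 1 / 2) (by norm_num) (s := n)
    (by linarith [n.cast_nonneg (α := ℝ)])).const_mul (√(2 * π))⁻¹
  refine h.congr (ae_of_all _ fun x => ?_)
  simp only [rpow_natCast, stdNormalPdf_eq_mul_exp]
  ring

lemma integrable_mul_stdNormalPdf : Integrable fun x => x * stdNormalPdf x := by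
  simpa using integrable_pow_mul_stdNormalPdf 1

lemma tendsto_pow_mul_stdNormalPdf_atTop (n : ℕ) :
    Tendsto (fun x => x ^ n * stdNormalPdf x) atTop (𝓝 0) := by
  have hexp : Tendsto (fun x : ℝ => exp (-(1 / 2) * x)) atTop (𝓝 0) :=
    tendsto_exp_atBot.comp <| tendsto_id.const_mul_atTop_of_neg (by norm_num)
  have h := ((rpow_mul_exp_neg_mul_sq_isLittleO_exp_neg (b := 1 / 2) (by norm_num) n).trans_tendsto
    hexp).const_mul (√(2 * π))⁻¹
  rw [mul_zero] at h
  refine h.congr fun x => ?_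
  simp only [rpow_natCast, stdNormalPdf_eq_mul_exp]
  ring

lemma stdNormalPhi_eq_integral (x : ℝ) : stdNormalPhi x = ∫ t in Iic x, stdNormalPdf t := by
  rw [stdNormalPhi, cdf_eq_real, measureReal_def, gaussianReal_apply_eq_integral 0 one_ne_zero,
    ENNReal.toReal_ofReal (integral_nonneg fun x => gaussianPDFReal_nonneg 0 1 x),
    gaussianPDFReal_zero_one]

lemma tendsto_stdNormalPhi_atTop : Tendsto stdNormalPhi atTop (𝓝 1) := tendsto_cdf_atTop _

lemma hasDerivAt_stdNormalPhi (x : ℝ) : HasDerivAt stdNormalPhi (stdNormalPdf x) x := by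
  have hsplit : ∀ b, stdNormalPhi b
      = (∫ t in Iic 0, stdNormalPdf t) + ∫ t in (0 : ℝ)..b, stdNormalPdf t := by
    intro b
    rw [stdNormalPhi_eq_integral,
      ← intervalIntegral.integral_Iic_sub_Iic integrable_stdNormalPdf.integrableOn
      integrable_stdNormalPdf.integrableOn]
    ring
  rw [funext hsplit]
  exact (intervalIntegral.integral_hasDerivAt_right
    integrable_stdNormalPdf.intervalIntegrable
    (continuous_stdNormalPdf.stronglyMeasurableAtFilter _ _)
    continuous_stdNormalPdf.continuousAt).const_add _

lemma integral_Ioi_stdNormalPdf (a : ℝ) : ∫ t in Ioi a, stdNormalPdf t = 1 - stdNormalPhi a := by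
  have htotal : ∫ t, stdNormalPdf t = 1 := by
    rw [← gaussianPDFReal_zero_one]
    exact integral_gaussianPDFReal_eq_one 0 one_ne_zero
  rw [stdNormalPhi_eq_integral, ← htotal,
    ← intervalIntegral.integral_Iic_add_Ioi integrable_stdNormalPdf.integrableOn
      integrable_stdNormalPdf.integrableOn]
  ring

lemma stdNormalPhi_neg (a : ℝ) : stdNormalPhi (-a) = 1 - stdNormalPhi a := by
  rw [stdNormalPhi_eq_integral, ← integral_comp_neg_Ioi]
  simp only [stdNormalPdf_neg]
  exact integral_Ioi_stdNormalPdf a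

lemma integral_Ioi_mul_stdNormalPdf (a : ℝ) :
    ∫ t in Ioi a, t * stdNormalPdf t = stdNormalPdf a := by
  have hlim : Tendsto (fun t => -stdNormalPdf t) atTop (𝓝 0) := by
    simpa using (tendsto_pow_mul_stdNormalPdf_atTop 0).neg
  rw [integral_Ioi_of_hasDerivAt_of_tendsto' (fun t _ => ?_) integrable_mul_stdNormalPdf.integrableOn hlim]
  · ring
  · exact (hasDerivAt_stdNormalPdf t).fun_neg.congr_deriv (by ring)

lemma integral_Ioi_sq_mul_stdNormalPdf (a : ℝ) :
    ∫ t in Ioi a, t ^ 2 * stdNormalPdf t = 1 - stdNormalPhi a + a * stdNormalPdf a := by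
  have hlim : Tendsto (fun t => stdNormalPhi t - t * stdNormalPdf t) atTop (𝓝 1) := by
    simpa using tendsto_stdNormalPhi_atTop.sub (tendsto_pow_mul_stdNormalPdf_atTop 1)
  rw [integral_Ioi_of_hasDerivAt_of_tendsto' (fun t _ => ?_)
    (integrable_pow_mul_stdNormalPdf 2).integrableOn hlim]
  · ring
  · refine ((hasDerivAt_stdNormalPhi t).sub ((hasDerivAt_id t).mul
      (hasDerivAt_stdNormalPdf t))).congr_deriv ?_
    simp only [id]
    ring

lemma integral_Ioi_affine_mul_stdNormalPdf (m σ a : ℝ) :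
    ∫ z in Ioi a, (m + σ * z) * stdNormalPdf z
      = m * (1 - stdNormalPhi a) + σ * stdNormalPdf a := by
  have h0 := integrable_stdNormalPdf.integrableOn (s := Ioi a)
  have h1 := integrable_mul_stdNormalPdf.integrableOn (s := Ioi a)
  simp only [add_mul, mul_assoc]
  rw [integral_add (h0.const_mul m) (h1.const_mul σ),
    integral_const_mul, integral_const_mul, integral_Ioi_stdNormalPdf,
    integral_Ioi_mul_stdNormalPdf]

lemma integral_Ioi_affine_sq_mul_stdNormalPdf (m σ a : ℝ) :
    ∫ z in Ioi a, (m + σ * z) ^ 2 * stdNormalPdf z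
      = (m ^ 2 + σ ^ 2) * (1 - stdNormalPhi a) + σ * (2 * m + σ * a) * stdNormalPdf a := by
  have h0 := integrable_stdNormalPdf.integrableOn (s := Ioi a)
  have h1 := integrable_mul_stdNormalPdf.integrableOn (s := Ioi a)
  have h2 := (integrable_pow_mul_stdNormalPdf 2).integrableOn (s := Ioi a)
  have h01 : IntegrableOn (fun z => m ^ 2 * stdNormalPdf z + 2 * m * σ * (z * stdNormalPdf z))
      (Ioi a) := (h0.const_mul _).add (h1.const_mul _)
  have hexpand : ∀ z, (m + σ * z) ^ 2 * stdNormalPdf z = m ^ 2 * stdNormalPdf z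
      + 2 * m * σ * (z * stdNormalPdf z) + σ ^ 2 * (z ^ 2 * stdNormalPdf z) := fun z => by ring
  simp only [hexpand]
  rw [integral_add h01 (h2.const_mul _),
    integral_add (h0.const_mul _) (h1.const_mul _),
    integral_const_mul, integral_const_mul, integral_const_mul, integral_Ioi_stdNormalPdf,
    integral_Ioi_mul_stdNormalPdf, integral_Ioi_sq_mul_stdNormalPdf]
  ring

lemma gaussianReal_eq_map_stdNormal (m σ : ℝ) :
    gaussianReal m ⟨σ ^ 2, sq_nonneg σ⟩ = (gaussianReal 0 1).map (fun z => m + σ * z) := by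
  change _ = (gaussianReal 0 1).map ((m + ·) ∘ (σ * ·))
  rw [← Measure.map_map (measurable_const_add m) (measurable_const_mul σ),
    gaussianReal_map_const_mul, gaussianReal_map_const_add, mul_zero, zero_add, mul_one]
  rfl

lemma integral_gaussianReal_eq_integral_stdNormalPdf (m σ : ℝ) {g : ℝ → ℝ} (hg : Measurable g) :
    ∫ x, g x ∂gaussianReal m ⟨σ ^ 2, sq_nonneg σ⟩ = ∫ z, stdNormalPdf z * g (m + σ * z) := by
  rw [gaussianReal_eq_map_stdNormal, integral_map (by fun_prop) hg.aestronglyMeasurable,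
    integral_gaussianReal_eq_integral_smul one_ne_zero, gaussianPDFReal_zero_one]
  rfl

lemma integral_max_zero_pow_gaussianReal {m σ : ℝ} (hσ : 0 < σ) {n : ℕ} (hn : n ≠ 0) :
    ∫ x, max x 0 ^ n ∂gaussianReal m ⟨σ ^ 2, sq_nonneg σ⟩
      = ∫ z in Ioi (-(m / σ)), (m + σ * z) ^ n * stdNormalPdf z := by
  rw [integral_gaussianReal_eq_integral_stdNormalPdf m σ (by fun_prop),
    ← integral_indicator measurableSet_Ioi]
  congr 1 with z
  have hpos : -(m / σ) < z ↔ 0 < m + σ * z := by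
    rw [← neg_div, div_lt_iff₀ hσ]
    constructor <;> intro h <;> linarith
  by_cases hz : -(m / σ) < z
  · rw [indicator_of_mem (mem_Ioi.mpr hz), max_eq_left (hpos.mp hz).le, mul_comm]
  · rw [indicator_of_notMem (notMem_Ioi.mpr (not_lt.mp hz)),
      max_eq_right (not_lt.mp (hpos.not.mp hz)), zero_pow hn, mul_zero]

theorem stmt_12 (m : ℝ) (σ : ℝ) (hσ : 0 < σ) :
    variance (fun x => max x 0) (gaussianReal m (⟨σ ^ 2, sq_nonneg σ⟩ : NNReal))
      = (m ^ 2 + σ ^ 2) * stdNormalPhi (m / σ) + m * σ * stdNormalPdf (m / σ)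
        - (m * stdNormalPhi (m / σ) + σ * stdNormalPdf (m / σ)) ^ 2 := by
  have hmem : MemLp (fun x : ℝ => max x 0) 2 (gaussianReal m ⟨σ ^ 2, sq_nonneg σ⟩) :=
    (memLp_id_gaussianReal 2).mono
      (by fun_prop : Continuous fun x : ℝ => max x 0).aestronglyMeasurable
      (ae_of_all _ fun x => by rcases le_total x 0 with h | h <;> simp [h])
  have hmean := integral_max_zero_pow_gaussianReal (m := m) hσ one_ne_zero
  have hsq := integral_max_zero_pow_gaussianReal (m := m) hσ two_ne_zero
  simp only [pow_one] at hmean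
  -- instance search does not find this for the anonymous-constructor variance
  have := instIsProbabilityMeasureGaussianReal m ⟨σ ^ 2, sq_nonneg σ⟩
  rw [variance_eq_sub hmem, Pi.pow_def, hmean, hsq, integral_Ioi_affine_mul_stdNormalPdf,
    integral_Ioi_affine_sq_mul_stdNormalPdf, stdNormalPhi_neg, stdNormalPdf_neg,
    mul_neg, mul_div_cancel₀ m hσ.ne']
  ring
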